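/- Let Q(i) satisfy the GreenLab recursion Q(i) = P·(1 − exp(−c·S(i))) with S(i) = s·Q(i−1) for constants P, c, s > 0 (leaf area proportional to previous production, needles living one cycle). Then the map F(Q) = P(1 − exp(−c·s·Q)) has a unique fixed point Q* > 0 if and only if P·c·s > 1, and Q* = 0 is the only nonnegative fixed point when P·c·s ≤ 1. -/

import Mathlib

/-!
With `a = c * s`, the map `F Q = P * (1 - exp (-a * Q))` is strictly concave with `F 0 = 0`, so the
secant slope `F Q / Q` is strictly decreasing on `Q > 0`: at most one positive `Q` has `F Q = Q`.
Since `1 - exp (-x) < x` for `x ≠ 0`, that slope stays below `F'(0) = P * a`, so no positive fixed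
point exists when `P * a ≤ 1`. When `P * a > 1`, the bound `1 - exp (-x) ≥ x / (1 + x)` gives
`F Q ≥ Q` at `Q = P - 1 / a`, while `F P ≤ P`; the intermediate value theorem does the rest.
-/

open Real Set Function

theorem StrictConcaveOn.eq_of_isFixedPt_of_pos {f : ℝ → ℝ} (hf : StrictConcaveOn ℝ (Ici 0) f)
    (hf0 : f 0 = 0) {x y : ℝ} (hx : 0 < x) (hy : 0 < y) (hfx : IsFixedPt f x)
    (hfy : IsFixedPt f y) : x = y := by
  wlog hxy : x < y generalizing x y
  · rcases (not_lt.1 hxy).eq_or_lt with h | h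
    · exact h.symm
    · exact (this hy hx hfy hfx h).symm
  have hslope := hf.secant_strict_mono (a := 0) self_mem_Ici hx.le hy.le hx.ne' hy.ne' hxy
  simp only [hf0, hfx.eq, hfy.eq, sub_zero, div_self hx.ne', div_self hy.ne', lt_self_iff_false]
    at hslope

theorem Real.div_one_add_le_one_sub_exp_neg {x : ℝ} (hx : -1 < x) :
    x / (1 + x) ≤ 1 - exp (-x) := by
  have h1x : 0 < 1 + x := by linarith
  have hexp : exp (-x) ≤ (1 + x)⁻¹ := by
    rw [exp_neg]
    exact inv_anti₀ h1x (by linarith [add_one_le_exp x])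
  calc x / (1 + x) = 1 - (1 + x)⁻¹ := by field_simp; ring
    _ ≤ 1 - exp (-x) := by linarith

/-- `a` stands for `c * s`: the Beer–Lambert coefficient times the leaf area per unit biomass. -/
noncomputable def greenlabMap (P a : ℝ) (Q : ℝ) : ℝ :=
  P * (1 - exp (-a * Q))

namespace greenlabMap

variable {P a : ℝ}

@[simp]
theorem apply_zero : greenlabMap P a 0 = 0 := by
  simp [greenlabMap]

theorem continuous : Continuous (greenlabMap P a) := by
  unfold greenlabMap
  fun_prop

theorem apply_le (hP : 0 ≤ P) (Q : ℝ) : greenlabMap P a Q ≤ P :=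
  mul_le_of_le_one_right hP (by linarith [exp_pos (-a * Q)])

theorem apply_lt_mul (hP : 0 < P) {Q : ℝ} (haQ : a * Q ≠ 0) : greenlabMap P a Q < P * a * Q := by
  have h := one_sub_lt_exp_neg haQ
  rw [greenlabMap, neg_mul, mul_assoc]
  exact mul_lt_mul_of_pos_left (by linarith) hP

theorem strictConcaveOn (hP : 0 < P) (ha : a ≠ 0) : StrictConcaveOn ℝ univ (greenlabMap P a) := by
  refine ⟨convex_univ, fun x _ y _ hxy u v hu hv huv => ?_⟩
  have hne : -a * x ≠ -a * y := by
    simpa [ha] using hxy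
  have hexp := strictConvexOn_exp.2 (mem_univ _) (mem_univ _) hne hu hv huv
  simp only [smul_eq_mul] at hexp ⊢
  have harg : u * (-a * x) + v * (-a * y) = -a * (u * x + v * y) := by ring
  rw [harg] at hexp
  unfold greenlabMap
  have hlin : u * (P * (1 - exp (-a * x))) + v * (P * (1 - exp (-a * y)))
      = P * (1 - (u * exp (-a * x) + v * exp (-a * y))) := by
    linear_combination P * huv
  rw [hlin]
  exact mul_lt_mul_of_pos_left (by linarith) hP

theorem eq_of_isFixedPt (hP : 0 < P) (ha : a ≠ 0) {x y : ℝ} (hx : 0 < x) (hy : 0 < y)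
    (hfx : IsFixedPt (greenlabMap P a) x) (hfy : IsFixedPt (greenlabMap P a) y) : x = y :=
  ((strictConcaveOn hP ha).subset (subset_univ _) (convex_Ici 0)).eq_of_isFixedPt_of_pos
    apply_zero hx hy hfx hfy

theorem not_isFixedPt_of_le_one (hP : 0 < P) (ha : 0 < a) (h : P * a ≤ 1) {Q : ℝ} (hQ : 0 < Q) :
    ¬IsFixedPt (greenlabMap P a) Q := fun hfix => by
  have hlt := apply_lt_mul hP (mul_pos ha hQ).ne'
  rw [hfix.eq] at hlt
  nlinarith

theorem exists_pos_isFixedPt (ha : 0 < a) (h : 1 < P * a) :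
    ∃ Q, 0 < Q ∧ IsFixedPt (greenlabMap P a) Q := by
  have hP : 0 < P := pos_of_mul_pos_left (by linarith) ha.le
  set Q₀ := P - 1 / a
  have haQ₀ : a * Q₀ = P * a - 1 := by
    simp only [Q₀]; field_simp
  have hQ₀ : 0 < Q₀ := pos_of_mul_pos_right (by linarith) ha.le
  have hQ₀_le : Q₀ ≤ greenlabMap P a Q₀ := by
    have hbound := div_one_add_le_one_sub_exp_neg (x := a * Q₀) (by linarith)
    rw [haQ₀, add_sub_cancel] at hbound
    calc Q₀ = P * ((P * a - 1) / (P * a)) := by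
            rw [← haQ₀]; field_simp
      _ ≤ greenlabMap P a Q₀ := by
            rw [greenlabMap, neg_mul, haQ₀]
            exact mul_le_mul_of_nonneg_left hbound hP.le
  have hQ₀_le_P : Q₀ ≤ P := sub_le_self P (one_div_pos.2 ha).le
  obtain ⟨Q, hQ, hfix⟩ := exists_mem_Icc_isFixedPt continuous.continuousOn hQ₀_le_P hQ₀_le
    (apply_le hP.le P)
  exact ⟨Q, hQ₀.trans_le hQ.1, hfix⟩

end greenlabMap

theorem greenlab_fixed_point_threshold
    (P c s : ℝ) (hP : 0 < P) (hc : 0 < c) (hs : 0 < s) :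
    ((∃! Q : ℝ, 0 < Q ∧ P * (1 - Real.exp (-(c * s) * Q)) = Q) ↔ 1 < P * c * s) ∧
    (P * c * s ≤ 1 → ∀ Q : ℝ, 0 ≤ Q → P * (1 - Real.exp (-(c * s) * Q)) = Q → Q = 0) := by
  have ha : 0 < c * s := mul_pos hc hs
  rw [mul_assoc]
  change ((∃! Q, 0 < Q ∧ IsFixedPt (greenlabMap P (c * s)) Q) ↔ 1 < P * (c * s)) ∧
    (P * (c * s) ≤ 1 → ∀ Q, 0 ≤ Q → IsFixedPt (greenlabMap P (c * s)) Q → Q = 0)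
  refine ⟨⟨fun ⟨Q, ⟨hQ, hfix⟩, _⟩ => ?_, fun h => ?_⟩, fun h Q hQ hfix => ?_⟩
  · by_contra hle
    exact greenlabMap.not_isFixedPt_of_le_one hP ha (not_lt.1 hle) hQ hfix
  · obtain ⟨Q, hQ, hfix⟩ := greenlabMap.exists_pos_isFixedPt ha h
    exact ⟨Q, ⟨hQ, hfix⟩, fun Q' ⟨hQ', hfix'⟩ =>
      greenlabMap.eq_of_isFixedPt hP ha.ne' hQ' hQ hfix' hfix⟩
  · by_contra hne
    exact greenlabMap.not_isFixedPt_of_le_one hP ha h (lt_of_le_of_ne hQ (Ne.symm hne)) hfix
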